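/- arXiv:2303.13291 — 2 statements merged into one kernel-verified Lean document; each statement's English description precedes it below -/
import Mathlib

section
/- Assume f, g : ℝ → ℝ are C² and H : M → ℝ is C¹ and satisfies f(H(q,p)) = |p|²/2 − g(H(q,p))/|q| for all (q,p) ∈ M. Define the Laplace–Runge–Lenz vector A(q,p) with components A^i(q,p) = |p|² q^i − (p·q) p^i − g(H(q,p)) q^i/|q|, i = 1,2,3. Let E ∈ ℝ. Then at every point (q,p) ∈ M with H(q,p) = E and f'(E) + g'(E)/|q| ≠ 0, the Poisson brackets {A^i, H}(q,p) vanish for i = 1,2,3. -/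
noncomputable section

/-- Squared Euclidean norm on `ℝ³`. -/
def normSq (v : Fin 3 → ℝ) : ℝ := ∑ i, v i ^ 2

/-- Euclidean norm on `ℝ³`. -/
def nrm (v : Fin 3 → ℝ) : ℝ := Real.sqrt (normSq v)

/-- Euclidean inner product `p·q`. -/
def dotP (p q : Fin 3 → ℝ) : ℝ := ∑ i, p i * q i

/-- Partial derivative `∂F/∂q^k` of a Hamiltonian function at `(q,p)`. -/
def pdQ (F : (Fin 3 → ℝ) → (Fin 3 → ℝ) → ℝ) (q p : Fin 3 → ℝ) (k : Fin 3) : ℝ :=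
  deriv (fun t => F (Function.update q k t) p) (q k)

/-- Partial derivative `∂F/∂p^k` of a Hamiltonian function at `(q,p)`. -/
def pdP (F : (Fin 3 → ℝ) → (Fin 3 → ℝ) → ℝ) (q p : Fin 3 → ℝ) (k : Fin 3) : ℝ :=
  deriv (fun t => F q (Function.update p k t)) (p k)

/-- The Hamiltonian vector field `X_F(q,p) = (∂F/∂p, −∂F/∂q)`. -/
def Xham (F : (Fin 3 → ℝ) → (Fin 3 → ℝ) → ℝ) (q p : Fin 3 → ℝ) :
    (Fin 3 → ℝ) × (Fin 3 → ℝ) :=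
  (fun k => pdP F q p k, fun k => -pdQ F q p k)


/-- The canonical Poisson bracket `{F,G} = Σ_k (∂F/∂q^k ∂G/∂p^k − ∂F/∂p^k ∂G/∂q^k)`. -/
def pbr (F G : (Fin 3 → ℝ) → (Fin 3 → ℝ) → ℝ) (q p : Fin 3 → ℝ) : ℝ :=
  ∑ k, (pdQ F q p k * pdP G q p k - pdP F q p k * pdQ G q p k)

/-- The Laplace–Runge–Lenz vector `A^i = |p|² q^i − (p·q) p^i − g(H(q,p)) q^i/|q|`. -/
def LRL (g : ℝ → ℝ) (H : (Fin 3 → ℝ) → (Fin 3 → ℝ) → ℝ) (i : Fin 3) :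
    (Fin 3 → ℝ) → (Fin 3 → ℝ) → ℝ :=
  fun q p => normSq p * q i - dotP p q * p i - g (H q p) * q i / nrm q

lemma update_eq_add (q : Fin 3 → ℝ) (k : Fin 3) (t : ℝ) :
    Function.update q k t = q + (t - q k) • (Pi.single k 1 : Fin 3 → ℝ) := by
  funext j
  rcases eq_or_ne j k with h | h
  · subst h; simp
  · simp [Function.update_of_ne h, Pi.single_eq_of_ne h]

lemma hasDerivAt_update' (q : Fin 3 → ℝ) (k : Fin 3) (t : ℝ) :
    HasDerivAt (fun s => Function.update q k s) (Pi.single k 1 : Fin 3 → ℝ) t := by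
  simp only [update_eq_add]
  have h : HasDerivAt (fun s : ℝ => s - q k) 1 t := (hasDerivAt_id t).sub_const _
  simpa using (h.smul_const (Pi.single k 1 : Fin 3 → ℝ)).const_add q

lemma hasDerivAt_update_coord (q : Fin 3 → ℝ) (k i : Fin 3) (t : ℝ) :
    HasDerivAt (fun s => Function.update q k s i) (if i = k then 1 else 0) t := by
  rcases eq_or_ne i k with h | h
  · subst h; simp only [Function.update_self, if_pos rfl]; exact hasDerivAt_id t
  · simp only [Function.update_of_ne h, if_neg h]; exact hasDerivAt_const _ _

lemma hasDerivAt_normSq_update (q : Fin 3 → ℝ) (k : Fin 3) :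
    HasDerivAt (fun s => normSq (Function.update q k s)) (2 * q k) (q k) := by
  have h : ∀ j : Fin 3, HasDerivAt (fun s => (Function.update q k s j) ^ 2)
      (if j = k then 2 * q k else 0) (q k) := by
    intro j
    rcases eq_or_ne j k with h | h
    · subst h
      simp only [Function.update_self, if_pos rfl]
      simpa using hasDerivAt_pow 2 (q j)
    · simp only [Function.update_of_ne h, if_neg h]; exact hasDerivAt_const _ _
  have := HasDerivAt.fun_sum (fun j (_ : j ∈ Finset.univ) => h j)
  simpa [normSq, Finset.sum_ite_eq'] using this

lemma hasDerivAt_dotP_right (p q : Fin 3 → ℝ) (k : Fin 3) :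
    HasDerivAt (fun s => dotP p (Function.update q k s)) (p k) (q k) := by
  have h : ∀ j : Fin 3, HasDerivAt (fun s => p j * Function.update q k s j)
      (if j = k then p k else 0) (q k) := by
    intro j
    rcases eq_or_ne j k with h | h
    · subst h
      simp only [Function.update_self, if_pos rfl]
      simpa using (hasDerivAt_id (q j)).const_mul (p j)
    · simp only [Function.update_of_ne h, if_neg h]; exact hasDerivAt_const _ _
  have := HasDerivAt.fun_sum (fun j (_ : j ∈ Finset.univ) => h j)
  simpa [dotP, Finset.sum_ite_eq'] using this

lemma hasDerivAt_dotP_left (p q : Fin 3 → ℝ) (k : Fin 3) :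
    HasDerivAt (fun s => dotP (Function.update p k s) q) (q k) (p k) := by
  have h : ∀ j : Fin 3, HasDerivAt (fun s => Function.update p k s j * q j)
      (if j = k then q k else 0) (p k) := by
    intro j
    rcases eq_or_ne j k with h | h
    · subst h
      simp only [Function.update_self, if_pos rfl]
      simpa using (hasDerivAt_id (p j)).mul_const (q j)
    · simp only [Function.update_of_ne h, if_neg h]; exact hasDerivAt_const _ _
  have := HasDerivAt.fun_sum (fun j (_ : j ∈ Finset.univ) => h j)
  simpa [dotP, Finset.sum_ite_eq'] using this

lemma normSq_nonneg (q : Fin 3 → ℝ) : 0 ≤ normSq q :=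
  Finset.sum_nonneg fun _ _ => sq_nonneg _

lemma normSq_pos {q : Fin 3 → ℝ} (hq : q ≠ 0) : 0 < normSq q := by
  rcases (normSq_nonneg q).lt_or_eq with h | h
  · exact h
  · exfalso
    apply hq
    funext j
    have := (Finset.sum_eq_zero_iff_of_nonneg (fun i _ => sq_nonneg (q i))).mp h.symm j
      (Finset.mem_univ j)
    simpa using pow_eq_zero_iff (two_ne_zero) |>.mp this

lemma nrm_pos {q : Fin 3 → ℝ} (hq : q ≠ 0) : 0 < nrm q :=
  Real.sqrt_pos.mpr (normSq_pos hq)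

lemma sq_nrm {q : Fin 3 → ℝ} : nrm q ^ 2 = normSq q :=
  Real.sq_sqrt (normSq_nonneg q)

lemma hasDerivAt_nrm_update (q : Fin 3 → ℝ) (hq : q ≠ 0) (k : Fin 3) :
    HasDerivAt (fun s => nrm (Function.update q k s)) (q k / nrm q) (q k) := by
  have hpos : 0 < normSq q := normSq_pos hq
  have h1 := hasDerivAt_normSq_update q k
  have hup : Function.update q k (q k) = q := Function.update_eq_self k q
  have hsq : HasDerivAt Real.sqrt (1 / (2 * Real.sqrt (normSq q))) (normSq (Function.update q k (q k))) := by
    rw [hup]; exact Real.hasDerivAt_sqrt (ne_of_gt hpos)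
  have h2 := hsq.comp (q k) h1
  have hne : Real.sqrt (normSq q) ≠ 0 := ne_of_gt (Real.sqrt_pos.mpr hpos)
  refine h2.congr_deriv ?_
  unfold nrm
  field_simp

set_option maxHeartbeats 4000000 in
/-- if `f, g` are C², `H` is C¹ on `M = (ℝ³∖{0}) × ℝ³` and satisfies
`f(H(q,p)) = |p|²/2 − g(H(q,p))/|q|` on `M`, then at every point of the levelset `H = E`
where `f'(E) + g'(E)/|q| ≠ 0`, all components of the Laplace–Runge–Lenz vector Poisson-commute
with `H`. -/
theorem LRL_in_involution_with_H
    (f g : ℝ → ℝ) (H : (Fin 3 → ℝ) → (Fin 3 → ℝ) → ℝ)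
    (hf : ContDiff ℝ 2 f) (hg : ContDiff ℝ 2 g)
    (hH : ContDiffOn ℝ 1 (fun x : (Fin 3 → ℝ) × (Fin 3 → ℝ) => H x.1 x.2) {x | x.1 ≠ 0})
    (hrel : ∀ q p : Fin 3 → ℝ, q ≠ 0 →
      f (H q p) = normSq p / 2 - g (H q p) / nrm q)
    (E : ℝ) :
    ∀ q p : Fin 3 → ℝ, q ≠ 0 → H q p = E →
      deriv f E + deriv g E / nrm q ≠ 0 →
      ∀ i : Fin 3, pbr (LRL g H i) H q p = 0 := by
  intro q p hq hE hc i
  have hr : nrm q ≠ 0 := (nrm_pos hq).ne'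
  have hopen : IsOpen {x : (Fin 3 → ℝ) × (Fin 3 → ℝ) | x.1 ≠ 0} :=
    isOpen_compl_singleton.preimage continuous_fst
  have hHdiff : DifferentiableAt ℝ (fun x : (Fin 3 → ℝ) × (Fin 3 → ℝ) => H x.1 x.2) (q, p) :=
    (hH.differentiableOn one_ne_zero).differentiableAt (hopen.mem_nhds hq)
  have hfd : HasDerivAt f (deriv f E) E :=
    ((hf.differentiable two_ne_zero) E).hasDerivAt
  have hgd : HasDerivAt g (deriv g E) E :=
    ((hg.differentiable two_ne_zero) E).hasDerivAt
  have hup : ∀ k : Fin 3, Function.update q k (q k) = q := fun k => Function.update_eq_self k q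
  have hvp : ∀ k : Fin 3, Function.update p k (p k) = p := fun k => Function.update_eq_self k p
  -- derivatives of H along coordinate lines
  have hHq : ∀ k, HasDerivAt (fun t => H (Function.update q k t) p) (pdQ H q p k) (q k) := by
    intro k
    have hcurve : HasDerivAt (fun t => (Function.update q k t, p))
        ((Pi.single k 1 : Fin 3 → ℝ), (0 : Fin 3 → ℝ)) (q k) :=
      (hasDerivAt_update' q k (q k)).prodMk (hasDerivAt_const _ _)
    have h2 : DifferentiableAt ℝ (fun x : (Fin 3 → ℝ) × (Fin 3 → ℝ) => H x.1 x.2)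
        (Function.update q k (q k), p) := by rw [hup k]; exact hHdiff
    have hd : DifferentiableAt ℝ (fun t => H (Function.update q k t) p) (q k) :=
      (h2.comp (q k) hcurve.differentiableAt :)
    exact hd.hasDerivAt
  have hHp : ∀ k, HasDerivAt (fun t => H q (Function.update p k t)) (pdP H q p k) (p k) := by
    intro k
    have hcurve : HasDerivAt (fun t => (q, Function.update p k t))
        ((0 : Fin 3 → ℝ), (Pi.single k 1 : Fin 3 → ℝ)) (p k) :=
      (hasDerivAt_const _ _).prodMk (hasDerivAt_update' p k (p k))
    have h2 : DifferentiableAt ℝ (fun x : (Fin 3 → ℝ) × (Fin 3 → ℝ) => H x.1 x.2)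
        (q, Function.update p k (p k)) := by rw [hvp k]; exact hHdiff
    have hd : DifferentiableAt ℝ (fun t => H q (Function.update p k t)) (p k) :=
      (h2.comp (p k) hcurve.differentiableAt :)
    exact hd.hasDerivAt
  have hgHq : ∀ k, HasDerivAt (fun t => g (H (Function.update q k t) p))
      (deriv g E * pdQ H q p k) (q k) := by
    intro k
    have h2 : HasDerivAt g (deriv g E) (H (Function.update q k (q k)) p) := by
      rw [hup k, hE]; exact hgd
    exact h2.comp (q k) (hHq k)
  have hfHq : ∀ k, HasDerivAt (fun t => f (H (Function.update q k t) p))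
      (deriv f E * pdQ H q p k) (q k) := by
    intro k
    have h2 : HasDerivAt f (deriv f E) (H (Function.update q k (q k)) p) := by
      rw [hup k, hE]; exact hfd
    exact h2.comp (q k) (hHq k)
  have hgHp : ∀ k, HasDerivAt (fun t => g (H q (Function.update p k t)))
      (deriv g E * pdP H q p k) (p k) := by
    intro k
    have h2 : HasDerivAt g (deriv g E) (H q (Function.update p k (p k))) := by
      rw [hvp k, hE]; exact hgd
    exact h2.comp (p k) (hHp k)
  have hfHp : ∀ k, HasDerivAt (fun t => f (H q (Function.update p k t)))
      (deriv f E * pdP H q p k) (p k) := by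
    intro k
    have h2 : HasDerivAt f (deriv f E) (H q (Function.update p k (p k))) := by
      rw [hvp k, hE]; exact hfd
    exact h2.comp (p k) (hHp k)
  -- implicit differentiation: formulas for the partial derivatives of H
  have EQ3 : ∀ k, pdQ H q p k =
      g E * q k / ((deriv f E + deriv g E / nrm q) * nrm q ^ 3) := by
    intro k
    have hdenne : nrm (Function.update q k (q k)) ≠ 0 := by rw [hup k]; exact hr
    have hdiv := (hgHq k).div (hasDerivAt_nrm_update q hq k) hdenne
    have hsum := (hfHq k).add hdiv
    have hev : (fun t => f (H (Function.update q k t) p)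
        + g (H (Function.update q k t) p) / nrm (Function.update q k t))
        =ᶠ[nhds (q k)] fun _ => normSq p / 2 := by
      have hcont : ContinuousAt (fun t : ℝ => Function.update q k t) (q k) :=
        (hasDerivAt_update' q k (q k)).continuousAt
      have h0 : Function.update q k (q k) ≠ 0 := by rw [hup k]; exact hq
      filter_upwards [hcont.eventually_ne h0] with t ht
      have := hrel (Function.update q k t) p ht
      linarith
    have h0 : HasDerivAt (fun t => f (H (Function.update q k t) p)
        + g (H (Function.update q k t) p) / nrm (Function.update q k t)) 0 (q k) :=
      (hasDerivAt_const (q k) (normSq p / 2)).congr_of_eventuallyEq hev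
    have huniq := hsum.unique h0
    rw [hup k, hE] at huniq
    rw [eq_div_iff (mul_ne_zero hc (pow_ne_zero 3 hr))]
    field_simp at huniq ⊢
    linear_combination huniq
  have EQ4 : ∀ k, pdP H q p k = p k / (deriv f E + deriv g E / nrm q) := by
    intro k
    have hsum := (hfHp k).add ((hgHp k).div_const (nrm q))
    have heq : (fun t => f (H q (Function.update p k t))
        + g (H q (Function.update p k t)) / nrm q)
        = fun t => normSq (Function.update p k t) / 2 := by
      funext t
      have := hrel q (Function.update p k t) hq
      linarith
    rw [show (fun t => f (H q (Function.update p k t))) + (fun x => g (H q (Function.update p k x)) / nrm q) = fun t => normSq (Function.update p k t) / 2 from heq] at hsum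
    have h0 : HasDerivAt (fun t => normSq (Function.update p k t) / 2) (2 * p k / 2) (p k) :=
      (hasDerivAt_normSq_update p k).div_const 2
    have huniq := hsum.unique h0
    rw [eq_div_iff hc]
    field_simp at huniq ⊢
    linear_combination huniq
  -- derivatives of the LRL component
  have EQ1 : ∀ k, pdQ (LRL g H i) q p k =
      normSq p * (if i = k then 1 else 0) - p k * p i
      - ((deriv g E * pdQ H q p k * q i + g E * (if i = k then 1 else 0)) * nrm q
          - g E * q i * (q k / nrm q)) / nrm q ^ 2 := by
    intro k
    have hdenne : nrm (Function.update q k (q k)) ≠ 0 := by rw [hup k]; exact hr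
    have h1 := (hasDerivAt_update_coord q k i (q k)).const_mul (normSq p)
    have h2 := (hasDerivAt_dotP_right p q k).mul_const (p i)
    have hnum := (hgHq k).mul (hasDerivAt_update_coord q k i (q k))
    have hdiv := hnum.div (hasDerivAt_nrm_update q hq k) hdenne
    have total := (h1.sub h2).sub hdiv
    simp only [Pi.mul_apply, hup k, hE] at total
    exact total.deriv
  have EQ2 : ∀ k, pdP (LRL g H i) q p k =
      2 * p k * q i - (q k * p i + dotP p q * (if i = k then 1 else 0))
      - deriv g E * pdP H q p k * q i / nrm q := by
    intro k
    have h1 := (hasDerivAt_normSq_update p k).mul_const (q i)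
    have h2 := (hasDerivAt_dotP_left p q k).mul (hasDerivAt_update_coord p k i (p k))
    have h3 := ((hgHp k).mul_const (q i)).div_const (nrm q)
    have total := (h1.sub h2).sub h3
    rw [hvp k] at total
    exact total.deriv
  have hN : normSq p = p 0 ^ 2 + p 1 ^ 2 + p 2 ^ 2 := by
    simp [normSq, Fin.sum_univ_three]
  have hS : dotP p q = p 0 * q 0 + p 1 * q 1 + p 2 * q 2 := by
    simp [dotP, Fin.sum_univ_three]
  have hs : nrm q ^ 2 = q 0 ^ 2 + q 1 ^ 2 + q 2 ^ 2 := by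
    rw [sq_nrm]; simp [normSq, Fin.sum_univ_three]
  simp only [pbr, EQ1, EQ2, EQ3, EQ4]
  rw [Fin.sum_univ_three, hN, hS]
  generalize hcg : deriv f E + deriv g E / nrm q = c at hc ⊢
  generalize hRg : nrm q = R at hs hr ⊢
  have hi : i = 0 ∨ i = 1 ∨ i = 2 := by fin_cases i <;> simp
  rcases hi with rfl | rfl | rfl
  · norm_num [Fin.ext_iff, Fin.reduceFinMk]
    field_simp
    linear_combination (-(g E * p 0) * c * R) * hs
  · norm_num [Fin.ext_iff, Fin.reduceFinMk]
    field_simp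
    linear_combination (-(g E * p 1) * c * R) * hs
  · norm_num [Fin.ext_iff, Fin.reduceFinMk]
    field_simp
    linear_combination (-(g E * p 2) * c * R) * hs

end
end

section
/- For every constant g ∈ ℝ, let H_g(q,p) = |p|²/2 − g/|q| and A_g^i(q,p) = |p|² q^i − (p·q) p^i − g q^i/|q| on M, and let L = q × p. Then for all (q,p) ∈ M and all i, j ∈ {1,2,3}: {A_g^i, A_g^j}(q,p) = −2 H_g(q,p) · Σ_{k=1}^{3} ε_{ijk} L^k(q,p), where ε_{ijk} is the Levi-Civita symbol. -/
noncomputable section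

/-- Cross product on `ℝ³`; `cross q p` is the angular momentum `L = q × p` at `(q,p)`. -/
def cross (a b : Fin 3 → ℝ) : Fin 3 → ℝ :=
  fun i => a (i + 1) * b (i + 2) - a (i + 2) * b (i + 1)

/-- The Levi-Civita symbol `ε_{ijk}` on three indices. -/
def levi (i j k : Fin 3) : ℝ :=
  (((i : ℕ) : ℝ) - ((j : ℕ) : ℝ)) * (((j : ℕ) : ℝ) - ((k : ℕ) : ℝ))
    * (((k : ℕ) : ℝ) - ((i : ℕ) : ℝ)) / 2


lemma normSq_update (q : Fin 3 → ℝ) (k : Fin 3) (t : ℝ) :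
    normSq (Function.update q k t) = (normSq q - q k ^ 2) + t ^ 2 := by
  fin_cases k <;> simp [normSq, Fin.sum_univ_three, Function.update_apply] <;> ring

lemma dotP_update_right (p q : Fin 3 → ℝ) (k : Fin 3) (t : ℝ) :
    dotP p (Function.update q k t) = (dotP p q - p k * q k) + p k * t := by
  fin_cases k <;> simp [dotP, Fin.sum_univ_three, Function.update_apply] <;> ring

lemma dotP_update_left (p q : Fin 3 → ℝ) (k : Fin 3) (t : ℝ) :
    dotP (Function.update p k t) q = (dotP p q - p k * q k) + q k * t := by
  fin_cases k <;> simp [dotP, Fin.sum_univ_three, Function.update_apply] <;> ring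

lemma pdP_A (g : ℝ) (q p : Fin 3 → ℝ) (i k : Fin 3) :
    pdP (fun q p => normSq p * q i - dotP p q * p i - g * q i / nrm q) q p k
      = 2 * p k * q i - (if k = i then dotP p q else 0) - q k * p i := by
  unfold pdP
  have hfun : (fun t => (fun q p => normSq p * q i - dotP p q * p i - g * q i / nrm q) q
      (Function.update p k t))
      = fun t => ((normSq p - p k ^ 2) + t ^ 2) * q i
          - ((dotP p q - p k * q k) + q k * t) * (if i = k then t else p i)
          - g * q i / nrm q := by
    funext t
    simp only [normSq_update, dotP_update_left, Function.update_apply]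
  rw [hfun]
  by_cases h : i = k
  · subst h
    simp only [eq_self_iff_true, if_true]
    have hd : HasDerivAt (fun t : ℝ => ((normSq p - p i ^ 2) + t ^ 2) * q i
        - ((dotP p q - p i * q i) + q i * t) * t - g * q i / nrm q)
        ((2 * p i) * q i - (((dotP p q - p i * q i) + q i * p i) * 1 + q i * p i) - 0) (p i) := by
      have h1 : HasDerivAt (fun t : ℝ => (normSq p - p i ^ 2) + t ^ 2) (2 * p i) (p i) := by
        simpa using ((hasDerivAt_pow 2 (p i)).const_add (normSq p - p i ^ 2))
      have h2 : HasDerivAt (fun t : ℝ => (dotP p q - p i * q i) + q i * t) (q i) (p i) := by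
        simpa using ((hasDerivAt_id (p i)).const_mul (q i)).const_add (dotP p q - p i * q i)
      have h3 := ((h1.mul_const (q i)).sub (h2.mul (hasDerivAt_id (p i)))).sub
        (hasDerivAt_const (p i) (g * q i / nrm q))
      exact h3.congr_deriv (by simp only [id_eq]; ring)
    rw [hd.deriv]; ring
  · simp only [if_neg h, if_neg (fun hh : k = i => h hh.symm)]
    have hd : HasDerivAt (fun t : ℝ => ((normSq p - p k ^ 2) + t ^ 2) * q i
        - ((dotP p q - p k * q k) + q k * t) * p i - g * q i / nrm q)
        ((2 * p k) * q i - q k * p i - 0) (p k) := by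
      have h1 : HasDerivAt (fun t : ℝ => (normSq p - p k ^ 2) + t ^ 2) (2 * p k) (p k) := by
        simpa using ((hasDerivAt_pow 2 (p k)).const_add (normSq p - p k ^ 2))
      have h2 : HasDerivAt (fun t : ℝ => (dotP p q - p k * q k) + q k * t) (q k) (p k) := by
        simpa using ((hasDerivAt_id (p k)).const_mul (q k)).const_add (dotP p q - p k * q k)
      exact ((h1.mul_const (q i)).sub (h2.mul_const (p i))).sub
        (hasDerivAt_const (p k) (g * q i / nrm q))
    rw [hd.deriv]; ring

lemma pdQ_A (g : ℝ) (q p : Fin 3 → ℝ) (hq : 0 < normSq q) (i k : Fin 3) :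
    pdQ (fun q p => normSq p * q i - dotP p q * p i - g * q i / nrm q) q p k
      = ((if k = i then normSq p * normSq q ^ 2 - g * nrm q * normSq q else 0)
          - p k * p i * normSq q ^ 2 + g * q i * q k * nrm q) / normSq q ^ 2 := by
  have hn : 0 < nrm q := Real.sqrt_pos.2 hq
  have hn2 : nrm q ^ 2 = normSq q := Real.sq_sqrt hq.le
  have hE : (normSq q - q k ^ 2) + q k ^ 2 = normSq q := by ring
  have hnrm : nrm q = Real.sqrt (normSq q) := rfl
  have hSval : Real.sqrt ((normSq q - q k ^ 2) + q k ^ 2) = nrm q := by rw [hE, hnrm]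
  have hS0 : Real.sqrt ((normSq q - q k ^ 2) + q k ^ 2) ≠ 0 := by rw [hSval]; exact hn.ne'
  have h1 : HasDerivAt (fun t : ℝ => (normSq q - q k ^ 2) + t ^ 2) (2 * q k) (q k) := by
    simpa using ((hasDerivAt_pow 2 (q k)).const_add (normSq q - q k ^ 2))
  have hsqrt : HasDerivAt (fun t : ℝ => Real.sqrt ((normSq q - q k ^ 2) + t ^ 2))
      (2 * q k / (2 * nrm q)) (q k) := by
    have h2 := h1.sqrt (by rw [hE]; exact hq.ne')
    rw [hE, ← hnrm] at h2
    exact h2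
  unfold pdQ
  have hfun : (fun t => (fun q p => normSq p * q i - dotP p q * p i - g * q i / nrm q)
      (Function.update q k t) p)
      = fun t => (normSq p * (if i = k then t else q i)
          - ((dotP p q - p k * q k) + p k * t) * p i)
          - g * (if i = k then t else q i) / Real.sqrt ((normSq q - q k ^ 2) + t ^ 2) := by
    funext t
    simp only [nrm, normSq_update, dotP_update_right, Function.update_apply]
  rw [hfun]
  have hB : HasDerivAt (fun t : ℝ => ((dotP p q - p k * q k) + p k * t) * p i)
      (p k * p i) (q k) := by
    simpa using (((hasDerivAt_id (q k)).const_mul (p k)).const_add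
      (dotP p q - p k * q k)).mul_const (p i)
  by_cases h : i = k
  · subst h
    simp only [eq_self_iff_true, if_true]
    have hA : HasDerivAt (fun t : ℝ => normSq p * t) (normSq p) (q i) := by
      simpa using (hasDerivAt_id (q i)).const_mul (normSq p)
    have hC : HasDerivAt (fun t : ℝ => g * t / Real.sqrt ((normSq q - q i ^ 2) + t ^ 2))
        ((g * Real.sqrt ((normSq q - q i ^ 2) + q i ^ 2)
          - g * q i * (2 * q i / (2 * nrm q))) / Real.sqrt ((normSq q - q i ^ 2) + q i ^ 2) ^ 2)
        (q i) := by
      have := ((hasDerivAt_id (q i)).const_mul g).div hsqrt hS0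
      exact this.congr_deriv (by simp only [id_eq, mul_one])
    have hd := (hA.sub hB).sub hC
    erw [hd.deriv]; rw [hSval, ← hn2]
    field_simp
    ring
  · simp only [if_neg h]
    have hC : HasDerivAt (fun t : ℝ => g * q i / Real.sqrt ((normSq q - q k ^ 2) + t ^ 2))
        ((0 * Real.sqrt ((normSq q - q k ^ 2) + q k ^ 2)
          - g * q i * (2 * q k / (2 * nrm q))) / Real.sqrt ((normSq q - q k ^ 2) + q k ^ 2) ^ 2)
        (q k) := (hasDerivAt_const (q k) (g * q i)).div hsqrt hS0
    have hd := ((hasDerivAt_const (q k) (normSq p * q i)).sub hB).sub hC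
    erw [hd.deriv]; rw [hSval, if_neg (fun hh : k = i => h hh.symm), ← hn2]
    field_simp
    ring

lemma pbr_antisymm (F G : (Fin 3 → ℝ) → (Fin 3 → ℝ) → ℝ) (q p : Fin 3 → ℝ) :
    pbr F G q p = - pbr G F q p := by
  unfold pbr
  rw [← Finset.sum_neg_distrib]
  exact Finset.sum_congr rfl (fun k _ => by ring)

lemma levi_swap (i j k : Fin 3) : levi j i k = - levi i j k := by
  unfold levi; ring

set_option maxHeartbeats 3200000 in
/-- for every constant `g`, the Laplace–Runge–Lenz vector
`A_g^i = |p|² q^i − (p·q) p^i − g q^i/|q|` of the Kepler Hamiltonian `H_g = |p|²/2 − g/|q|`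
satisfies `{A_g^i, A_g^j} = −2 H_g · Σ_k ε_{ijk} L^k` at every point of `M = (ℝ³∖{0}) × ℝ³`,
where `L = q × p`. -/
theorem kepler_LRL_bracket_LRL (g : ℝ) :
    ∀ q p : Fin 3 → ℝ, q ≠ 0 → ∀ i j : Fin 3,
      pbr (fun q p => normSq p * q i - dotP p q * p i - g * q i / nrm q)
          (fun q p => normSq p * q j - dotP p q * p j - g * q j / nrm q) q p
        = -2 * (normSq p / 2 - g / nrm q) * ∑ k, levi i j k * cross q p k := by
  intro q p hq i j
  obtain ⟨k, hk⟩ := Function.ne_iff.mp hq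
  have hk' : q k ≠ 0 := by simpa using hk
  have hs : 0 < normSq q := by
    have h1 : q k ^ 2 ≤ normSq q :=
      Finset.single_le_sum (fun i _ => sq_nonneg (q i)) (Finset.mem_univ k)
    have h2 : 0 < q k ^ 2 := by positivity
    linarith
  have hn : 0 < nrm q := Real.sqrt_pos.2 hs
  have hn2 : nrm q ^ 2 = normSq q := Real.sq_sqrt hs.le
  have c0 : cross q p 0 = q 1 * p 2 - q 2 * p 1 := rfl
  have c1 : cross q p 1 = q 2 * p 0 - q 0 * p 2 := rfl
  have c2 : cross q p 2 = q 0 * p 1 - q 1 * p 0 := rfl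
  have hs' : q 0 ^ 2 + q 1 ^ 2 + q 2 ^ 2 ≠ 0 := by
    have : normSq q = q 0 ^ 2 + q 1 ^ 2 + q 2 ^ 2 := by
      simp [normSq, Fin.sum_univ_three]
    rw [← this]; exact hs.ne'
  have hsq : normSq q = q 0 ^ 2 + q 1 ^ 2 + q 2 ^ 2 := by
    simp [normSq, Fin.sum_univ_three]
  have hsp : normSq p = p 0 ^ 2 + p 1 ^ 2 + p 2 ^ 2 := by
    simp [normSq, Fin.sum_univ_three]
  have hcomb : ∀ a b c d D : ℝ, a / D * b - c * (d / D) = (a * b - c * d) / D := by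
    intros a b c d D
    rw [div_mul_eq_mul_div, mul_div_assoc', div_sub_div_same]
  have hR : ∀ L : ℝ, -2 * (normSq p / 2 - g / nrm q) * L
      = (2 * g * nrm q - normSq p * normSq q) * L / normSq q := by
    intro L
    rw [eq_div_iff hs.ne', ← hn2]
    field_simp
    ring
  have key : ∀ i' j' : Fin 3,
      pbr (fun q p => normSq p * q i' - dotP p q * p i' - g * q i' / nrm q)
          (fun q p => normSq p * q j' - dotP p q * p j' - g * q j' / nrm q) q p
        = -2 * (normSq p / 2 - g / nrm q) * ∑ k, levi i' j' k * cross q p k := by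
    intro i' j'
    simp only [pbr, pdQ_A g q p hs, pdP_A g q p, hcomb, Fin.sum_univ_three, hR,
      ← add_div, c0, c1, c2, levi]
    fin_cases i' <;> fin_cases j' <;>
      · try simp
        first
          | (rw [div_eq_div_iff (pow_ne_zero 2 hs.ne') hs.ne', hsq, hsp]; ring)
          | (left; rw [hsq, hsp]; ring)
  exact key i j

end
end
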